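/- arXiv:1902.02736 — 2 statements merged into one kernel-verified Lean document; each statement's English description precedes it below -/
import Mathlib

section
/- Fix a C-sequence ⟨C_α | α < ω₁⟩ on ω₁ satisfying (⋆). Then ρ₂ is nontrivial modulo bounded: there exists no function ρ̃₂ : ω₁ → ℤ such that for every β < ω₁ the function α ↦ ρ̃₂(α) − ρ₂(α,β) is bounded on β. -/
noncomputable section
open Ordinal Set

/-- The first uncountable ordinal `ω₁`. -/
def omega1 : Ordinal.{0} := (Cardinal.aleph 1).ord

/-- `IsOtp s o`: the set of ordinals `s` has order type `o`. -/
def IsOtp (s : Set Ordinal.{0}) (o : Ordinal.{0}) : Prop :=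
  Nonempty (s ≃o Set.Iio o)

/-- A C-sequence on `ω₁`: each `C α` is a cofinal subset of `α` (in particular `C 0 = ∅`). -/
def IsCSequence (C : Ordinal.{0} → Set Ordinal.{0}) : Prop :=
  ∀ α, α < omega1 → (∀ ξ ∈ C α, ξ < α) ∧ (∀ ξ, ξ < α → ∃ η ∈ C α, ξ ≤ η)

/-- The condition `(⋆)`: `otp (C α) = cf (α)` for all `α < ω₁`. -/
def StarProperty (C : Ordinal.{0} → Set Ordinal.{0}) : Prop :=
  ∀ α, α < omega1 → IsOtp (C α) (Ordinal.cof α).ord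

/-- `Tr` is the upper trace function of the walk along the C-sequence `C`:
`Tr α α = {α}` and `Tr α β = {β} ∪ Tr α (min (C β \ α))` for `α < β < ω₁`. -/
def IsUpperTrace (C : Ordinal.{0} → Set Ordinal.{0})
    (Tr : Ordinal.{0} → Ordinal.{0} → Finset Ordinal.{0}) : Prop :=
  (∀ α, Tr α α = {α}) ∧
  ∀ α β, α < β → β < omega1 → Tr α β = insert β (Tr α (sInf (C β \ Set.Iio α)))

/-- `IsRho1 C Tr rho1`: `rho1 α β` is the maximum weight
`max {otp (C ξ ∩ α) | ξ ∈ Tr α β \ {α}}`, a natural number under `(⋆)`. -/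
def IsRho1 (C : Ordinal.{0} → Set Ordinal.{0})
    (Tr : Ordinal.{0} → Ordinal.{0} → Finset Ordinal.{0})
    (rho1 : Ordinal.{0} → Ordinal.{0} → ℕ) : Prop :=
  ∀ α β, α < β → β < omega1 →
    IsGreatest {o : Ordinal | ∃ ξ ∈ Tr α β, ξ ≠ α ∧ IsOtp (C ξ ∩ Set.Iio α) o}
      (rho1 α β)

/-- The number-of-steps function `ρ₂ (α, β) = |Tr (α, β)|`, as an integer. -/
def rho2 (Tr : Ordinal.{0} → Ordinal.{0} → Finset Ordinal.{0}) (α β : Ordinal.{0}) : ℤ :=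
  (Tr α β).card

/-!
Suppose `f` were such a function, with bound `K β` on `β`. By pigeonhole there are `n` and a
cofinal set `Γ` of limit ordinals on which `K = n`. By `(⋆)`, walks from `γ` to all `α` close
enough below a limit `β ≤ γ` pass through `β`, so `ρ₂(α,γ) = ρ₂(β,γ) + ρ₂(α,β) - 1 > ρ₂(β,γ)`.
Descending from a point of `accPoints^[2n] Γ` thus gives `α₀ < γ` in `Γ`
with `ρ₂(α₀,γ) ≥ 2n + 2`. But for `α` just below `α₀`,
`ρ₂(α,γ) - ρ₂(α,α₀) = ρ₂(α₀,γ) - 1 > 2n`, while both terms are within `n` of `f α`.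
-/

def walkStep (C : Ordinal.{0} → Set Ordinal.{0}) (α β : Ordinal.{0}) : Ordinal.{0} :=
  sInf (C β \ Iio α)

theorem iSup_lt_omega1 {f : ℕ → Ordinal.{0}} (hf : ∀ n, f n < omega1) : ⨆ n, f n < omega1 := by
  simp only [omega1, Cardinal.ord_aleph] at hf ⊢
  exact iSup_lt_omega_one hf

theorem isSuccLimit_omega1 : Order.IsSuccLimit omega1 :=
  Cardinal.isSuccLimit_ord (Cardinal.aleph0_le_aleph 1)

theorem ord_cof_le_omega0_of_lt_omega1 {γ : Ordinal.{0}} (hγ : γ < omega1) : γ.cof.ord ≤ ω := by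
  have hcard : γ.card ≤ Cardinal.aleph0 := by
    rw [← Order.lt_succ_iff, Cardinal.succ_aleph0]
    exact Cardinal.lt_ord.1 hγ
  rw [← Cardinal.ord_aleph0, Cardinal.ord_le_ord]
  exact (cof_le_card γ).trans hcard

def IsCofinalInOmega1 (S : Set Ordinal.{0}) : Prop :=
  ∀ ξ, ξ < omega1 → ∃ η ∈ S, ξ < η ∧ η < omega1

def accPoints (S : Set Ordinal.{0}) : Set Ordinal.{0} :=
  {β | β < omega1 ∧ 0 < β ∧ ∀ ξ, ξ < β → ∃ η ∈ S, ξ < η ∧ η < β}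

section Cofinal

variable {S : Set Ordinal.{0}} {β : Ordinal.{0}}

theorem isSuccLimit_of_mem_accPoints (h : β ∈ accPoints S) : Order.IsSuccLimit β := by
  refine Ordinal.isSuccLimit_iff.2 ⟨h.2.1.ne', Order.isSuccPrelimit_of_succ_lt fun ξ hξ => ?_⟩
  obtain ⟨η, -, hξη, hηβ⟩ := h.2.2 ξ hξ
  exact (Order.succ_le_of_lt hξη).trans_lt hηβ

theorem isCofinalInOmega1_univ : IsCofinalInOmega1 univ := fun ξ hξ =>
  ⟨Order.succ ξ, mem_univ _, Order.lt_succ ξ, isSuccLimit_omega1.succ_lt hξ⟩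

/-- The supremum of an `ω`-sequence in `S` climbing from `ξ` is a point of `accPoints S`
above `ξ`. -/
theorem isCofinalInOmega1_accPoints (hS : IsCofinalInOmega1 S) :
    IsCofinalInOmega1 (accPoints S) := by
  choose! g hgS hlt hgω using hS
  intro ξ hξ
  have hω : ∀ n, g^[n] ξ < omega1 := fun n => by
    induction n with
    | zero => exact hξ
    | succ n ih => rw [Function.iterate_succ_apply']; exact hgω _ ih
  have hstep : ∀ n, g^[n] ξ < g^[n + 1] ξ := fun n => by
    rw [Function.iterate_succ_apply']; exact hlt _ (hω n)
  set β := ⨆ n, g^[n] ξ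
  have hle : ∀ n, g^[n] ξ ≤ β := Ordinal.le_iSup _
  have hξβ : ξ < β := (hstep 0).trans_le (hle 1)
  have hβ : β < omega1 := iSup_lt_omega1 hω
  refine ⟨β, ⟨hβ, hξβ.pos, ?_⟩, hξβ, hβ⟩
  intro ζ hζ
  obtain ⟨n, hn⟩ := Ordinal.lt_iSup_iff.1 hζ
  refine ⟨g^[n + 1] ξ, ?_, hn.trans (hstep n), (hstep (n + 1)).trans_le (hle (n + 2))⟩
  rw [Function.iterate_succ_apply']
  exact hgS _ (hω n)

theorem isCofinalInOmega1_iterate_accPoints (hS : IsCofinalInOmega1 S) (k : ℕ) :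
    IsCofinalInOmega1 (accPoints^[k] S) := by
  induction k with
  | zero => exact hS
  | succ k ih => rw [Function.iterate_succ_apply']; exact isCofinalInOmega1_accPoints ih

/-- Pigeonhole, by the uncountable cofinality of `ω₁`. -/
theorem IsCofinalInOmega1.exists_fiber (hS : IsCofinalInOmega1 S) (K : Ordinal.{0} → ℕ) :
    ∃ n, IsCofinalInOmega1 {β ∈ S | K β = n} := by
  by_contra! h
  simp only [IsCofinalInOmega1, not_forall, not_exists, not_and, not_lt] at h
  choose ξ hξ hbound using h
  obtain ⟨η, hηS, hlt, hη⟩ := hS _ (iSup_lt_omega1 hξ)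
  exact (hbound (K η) η ⟨hηS, rfl⟩ ((Ordinal.le_iSup ξ (K η)).trans_lt hlt)).not_gt hη

end Cofinal

section Walks

variable {C : Ordinal.{0} → Set Ordinal.{0}} {Tr : Ordinal.{0} → Ordinal.{0} → Finset Ordinal.{0}}
  {α β γ : Ordinal.{0}}

theorem walkStep_mem (hC : IsCSequence C) (hαβ : α < β) (hβ : β < omega1) :
    walkStep C α β ∈ C β \ Iio α := by
  obtain ⟨η, hη, hαη⟩ := (hC β hβ).2 α hαβ
  exact csInf_mem ⟨η, hη, not_lt.2 hαη⟩

theorem le_walkStep (hC : IsCSequence C) (hαβ : α < β) (hβ : β < omega1) :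
    α ≤ walkStep C α β :=
  not_lt.1 (walkStep_mem hC hαβ hβ).2

theorem walkStep_lt (hC : IsCSequence C) (hαβ : α < β) (hβ : β < omega1) :
    walkStep C α β < β :=
  (hC β hβ).1 _ (walkStep_mem hC hαβ hβ).1

theorem walkStep_le {ξ : Ordinal.{0}} (hξ : ξ ∈ C β) (hαξ : α ≤ ξ) : walkStep C α β ≤ ξ :=
  csInf_le' ⟨hξ, not_lt.2 hαξ⟩

/-- `C γ ∩ β` lies below `walkStep C β γ`, which has finite index in `C γ` since by `(⋆)`
the order type of `C γ` is at most `ω`. -/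
theorem finite_inter_Iio (hC : IsCSequence C) (hstar : StarProperty C) (hβγ : β < γ)
    (hγ : γ < omega1) : (C γ ∩ Iio β).Finite := by
  obtain ⟨e⟩ := hstar γ hγ
  set δ : C γ := ⟨walkStep C β γ, (walkStep_mem hC hβγ hγ).1⟩
  let φ : ↥(C γ ∩ Iio β) → ↥(Iio (e δ : Ordinal)) := fun x =>
    ⟨e ⟨x, x.2.1⟩, e.lt_iff_lt.2 (Subtype.mk_lt_mk.2
      (x.2.2.trans_le (le_walkStep hC hβγ hγ)))⟩
  have hφ : Function.Injective φ := by
    intro x y hxy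
    simpa [φ, Subtype.coe_inj, e.apply_eq_iff_eq] using congrArg Subtype.val hxy
  have hfin : (e δ : Ordinal).card < Cardinal.aleph0 :=
    card_lt_aleph0.2 ((e δ).2.trans_le (ord_cof_le_omega0_of_lt_omega1 hγ))
  rw [← Cardinal.lt_aleph0_iff_set_finite]
  calc Cardinal.mk ↥(C γ ∩ Iio β) ≤ Cardinal.mk ↥(Iio (e δ : Ordinal)) :=
        Cardinal.mk_le_of_injective hφ
    _ < Cardinal.aleph0 := by rwa [Cardinal.mk_Iio_ordinal, Cardinal.lift_lt_aleph0]

theorem exists_walkStep_eq (hC : IsCSequence C) (hstar : StarProperty C) (hβ : 0 < β)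
    (hβγ : β < γ) (hγ : γ < omega1) :
    ∃ s, s < β ∧ ∀ α, s < α → α ≤ β → walkStep C α γ = walkStep C β γ := by
  set F := (finite_inter_Iio hC hstar hβγ hγ).toFinset
  have hsβ : F.sup id < β :=
    (Finset.sup_lt_iff hβ).2 fun x hx => ((Set.Finite.mem_toFinset _).1 hx).2
  refine ⟨F.sup id, hsβ, fun α hsα hαβ => le_antisymm ?_ ?_⟩
  · exact walkStep_le (walkStep_mem hC hβγ hγ).1 (hαβ.trans (le_walkStep hC hβγ hγ))
  · have hαγ := hαβ.trans_lt hβγ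
    obtain ⟨hmem, hαle⟩ := walkStep_mem hC hαγ hγ
    refine walkStep_le hmem (not_lt.1 fun hlt => hαle ?_)
    have : walkStep C α γ ∈ F := (Set.Finite.mem_toFinset _).2 ⟨hmem, hlt⟩
    exact (Finset.le_sup (f := id) this).trans_lt hsα

theorem trace_eq_insert_walkStep (hTr : IsUpperTrace C Tr) (hαβ : α < β) (hβ : β < omega1) :
    Tr α β = insert β (Tr α (walkStep C α β)) :=
  hTr.2 α β hαβ hβ

theorem right_mem_trace (hTr : IsUpperTrace C Tr) (hαβ : α ≤ β) (hβ : β < omega1) :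
    β ∈ Tr α β := by
  rcases hαβ.eq_or_lt with rfl | hlt
  · simp [hTr.1]
  · simp [trace_eq_insert_walkStep hTr hlt hβ]

theorem left_mem_trace (hC : IsCSequence C) (hTr : IsUpperTrace C Tr) (hαβ : α ≤ β)
    (hβ : β < omega1) : α ∈ Tr α β := by
  induction β using WellFoundedLT.induction with
  | _ β IH =>
    rcases hαβ.eq_or_lt with rfl | hlt
    · simp [hTr.1]
    · rw [trace_eq_insert_walkStep hTr hlt hβ]
      exact Finset.mem_insert_of_mem (IH _ (walkStep_lt hC hlt hβ) (le_walkStep hC hlt hβ)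
        ((walkStep_lt hC hlt hβ).trans hβ))

theorem mem_trace_le (hC : IsCSequence C) (hTr : IsUpperTrace C Tr) (hαβ : α ≤ β)
    (hβ : β < omega1) {ξ : Ordinal.{0}} (hξ : ξ ∈ Tr α β) : α ≤ ξ ∧ ξ ≤ β := by
  induction β using WellFoundedLT.induction with
  | _ β IH =>
    rcases hαβ.eq_or_lt with rfl | hlt
    · simp_all [hTr.1]
    · rw [trace_eq_insert_walkStep hTr hlt hβ, Finset.mem_insert] at hξ
      rcases hξ with rfl | hξ
      · exact ⟨hlt.le, le_rfl⟩
      · have hstep := walkStep_lt hC hlt hβ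
        exact (IH _ hstep (le_walkStep hC hlt hβ) (hstep.trans hβ) hξ).imp_right
          (·.trans hstep.le)

theorem two_le_rho2 (hC : IsCSequence C) (hTr : IsUpperTrace C Tr) (hαβ : α < β)
    (hβ : β < omega1) : 2 ≤ rho2 Tr α β := by
  have hsub : ({α, β} : Finset Ordinal) ⊆ Tr α β := by
    rw [Finset.insert_subset_iff, Finset.singleton_subset_iff]
    exact ⟨left_mem_trace hC hTr hαβ.le hβ, right_mem_trace hTr hαβ.le hβ⟩
  have hcard := Finset.card_le_card hsub
  rw [Finset.card_pair hαβ.ne] at hcard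
  unfold rho2
  exact_mod_cast hcard

theorem rho2_eq_of_trace_eq_union (hC : IsCSequence C) (hTr : IsUpperTrace C Tr)
    (hαβ : α ≤ β) (hβγ : β ≤ γ) (hγ : γ < omega1) (h : Tr α γ = Tr β γ ∪ Tr α β) :
    rho2 Tr α γ = rho2 Tr β γ + rho2 Tr α β - 1 := by
  have hβ := hβγ.trans_lt hγ
  have hinter : Tr β γ ∩ Tr α β = {β} := by
    ext ξ
    rw [Finset.mem_inter, Finset.mem_singleton]
    constructor
    · rintro ⟨hξγ, hξβ⟩
      exact le_antisymm (mem_trace_le hC hTr hαβ hβ hξβ).2 (mem_trace_le hC hTr hβγ hγ hξγ).1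
    · rintro rfl
      exact ⟨left_mem_trace hC hTr hβγ hγ, right_mem_trace hTr hαβ hβ⟩
  have hcard := Finset.card_union_add_card_inter (Tr β γ) (Tr α β)
  rw [hinter, Finset.card_singleton, ← h] at hcard
  unfold rho2
  omega

/-- The walks from `γ` to all `α` close enough below a limit `β` pass through `β`: by `(⋆)`
only finitely many points of each `C ξ` on the way lie below `β`. -/
theorem exists_trace_eq_union (hC : IsCSequence C) (hstar : StarProperty C)
    (hTr : IsUpperTrace C Tr) (hβ : Order.IsSuccLimit β) (hβγ : β ≤ γ) (hγ : γ < omega1) :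
    ∃ t, t < β ∧ ∀ α, t < α → α ≤ β → Tr α γ = Tr β γ ∪ Tr α β := by
  induction γ using WellFoundedLT.induction with
  | _ γ IH =>
    rcases hβγ.eq_or_lt with rfl | hlt
    · refine ⟨0, hβ.pos, fun α _ hαβ => ?_⟩
      rw [hTr.1, Finset.singleton_union, Finset.insert_eq_of_mem (right_mem_trace hTr hαβ hγ)]
    · obtain ⟨s, hs, hstep⟩ := exists_walkStep_eq hC hstar hβ.pos hlt hγ
      have hδ := walkStep_lt hC hlt hγ
      obtain ⟨t, ht, hnext⟩ := IH _ hδ (le_walkStep hC hlt hγ) (hδ.trans hγ)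
      refine ⟨max s t, max_lt hs ht, fun α hα hαβ => ?_⟩
      rw [trace_eq_insert_walkStep hTr (hαβ.trans_lt hlt) hγ,
        trace_eq_insert_walkStep hTr hlt hγ, hstep α ((le_max_left s t).trans_lt hα) hαβ,
        hnext α ((le_max_right s t).trans_lt hα) hαβ, Finset.insert_union]

theorem exists_rho2_eq_add (hC : IsCSequence C) (hstar : StarProperty C)
    (hTr : IsUpperTrace C Tr) (hβ : Order.IsSuccLimit β) (hβγ : β ≤ γ) (hγ : γ < omega1) :
    ∃ t, t < β ∧ ∀ α, t < α → α ≤ β → rho2 Tr α γ = rho2 Tr β γ + rho2 Tr α β - 1 := by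
  obtain ⟨t, ht, h⟩ := exists_trace_eq_union hC hstar hTr hβ hβγ hγ
  exact ⟨t, ht, fun α htα hαβ => rho2_eq_of_trace_eq_union hC hTr hαβ hβγ hγ (h α htα hαβ)⟩

theorem exists_le_rho2_add_of_mem_iterate_accPoints (hC : IsCSequence C)
    (hstar : StarProperty C) (hTr : IsUpperTrace C Tr) {S : Set Ordinal.{0}} (hγ : γ < omega1)
    (k : ℕ) (hβ : β ∈ accPoints^[k] S) (hβγ : β < γ) :
    ∃ α ∈ S, α ≤ β ∧ rho2 Tr β γ + k ≤ rho2 Tr α γ := by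
  induction k generalizing β with
  | zero => exact ⟨β, hβ, le_rfl, by simp⟩
  | succ k ih =>
    rw [Function.iterate_succ_apply'] at hβ
    obtain ⟨t, ht, hsplit⟩ :=
      exists_rho2_eq_add hC hstar hTr (isSuccLimit_of_mem_accPoints hβ) hβγ.le hγ
    obtain ⟨β', hβ', htβ', hβ'β⟩ := hβ.2.2 t ht
    obtain ⟨α, hαS, hαβ', hρ⟩ := ih hβ' (hβ'β.trans hβγ)
    have h2 := two_le_rho2 hC hTr hβ'β hβ.1
    have := hsplit β' htβ' hβ'β.le
    exact ⟨α, hαS, hαβ'.trans hβ'β.le, by push_cast; linarith⟩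

end Walks

/-- Theorem (nontriviality of ρ₂ modulo bounded): for a C-sequence on ω₁ satisfying (⋆),
there is no `ρ̃₂ : ω₁ → ℤ` such that `ρ̃₂ - ρ₂(·,β)` is bounded on `β` for every `β < ω₁`. -/
theorem statement3 (C : Ordinal → Set Ordinal) (hC : IsCSequence C) (hstar : StarProperty C)
    (Tr : Ordinal → Ordinal → Finset Ordinal) (hTr : IsUpperTrace C Tr) :
    ¬∃ f : Ordinal → ℤ, ∀ β, β < omega1 →
      ∃ k : ℕ, ∀ α, α < β → |f α - rho2 Tr α β| ≤ (k : ℤ) := by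
  rintro ⟨f, hf⟩
  choose! K hK using hf
  obtain ⟨n, hΓ⟩ := (isCofinalInOmega1_accPoints isCofinalInOmega1_univ).exists_fiber K
  obtain ⟨β, hβ, -, hβω⟩ :=
    isCofinalInOmega1_iterate_accPoints hΓ (2 * n) 0 isSuccLimit_omega1.pos
  obtain ⟨γ, ⟨-, hKγ⟩, hβγ, hγ⟩ := hΓ β hβω
  obtain ⟨α₀, ⟨hα₀, hKα₀⟩, hα₀β, hρ⟩ :=
    exists_le_rho2_add_of_mem_iterate_accPoints hC hstar hTr hγ (2 * n) hβ hβγ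
  have hα₀γ := hα₀β.trans_lt hβγ
  obtain ⟨t, ht, hsplit⟩ :=
    exists_rho2_eq_add hC hstar hTr (isSuccLimit_of_mem_accPoints hα₀) hα₀γ.le hγ
  have hα := (isSuccLimit_of_mem_accPoints hα₀).succ_lt ht
  have hρα := hsplit _ (Order.lt_succ t) hα.le
  have hfγ := abs_le.1 (hK γ hγ _ (hα.trans hα₀γ))
  have hfα₀ := abs_le.1 (hK α₀ hα₀.1 _ hα)
  have hρβ := two_le_rho2 hC hTr hβγ hγ
  rw [hKγ] at hfγ
  rw [hKα₀] at hfα₀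
  push_cast at hρ
  linarith [hfγ.1, hfγ.2, hfα₀.1, hfα₀.2]
end
end

section
/- Fix a C-sequence ⟨C_α | α < ω₁⟩ on ω₁ satisfying (⋆). Then ρ₂ is coherent modulo locally constant: for all β < γ < ω₁, the function α ↦ ρ₂(α,γ) − ρ₂(α,β) defined on β is locally constant with respect to the order topology on β. -/
noncomputable section
open Ordinal Set

/-! Under (⋆) every `C δ` with `δ < ω₁` has order type at most `ω`, so only finitely many of
its points lie below a given `α < δ`. Hence for all `ξ ≤ α` close enough to `α` the walk from `δ`
down to `ξ` takes the same first step as the walk down to `α`. By induction along the walk from `δ`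
to `α`, near `α` the walk to `ξ` is the walk to `α` followed by the walk from `α` to `ξ`, so
`ρ₂(ξ,δ) = ρ₂(α,δ) + ρ₂(ξ,α) - 1`. Applying this to `δ = β` and `δ = γ`, the difference
`ρ₂(ξ,γ) - ρ₂(ξ,β)` is constant near `α`. -/

open Filter Topology

lemma ord_cof_le_omega0_of_lt_omega1_s5 {δ : Ordinal} (hδ : δ < omega1) : (cof δ).ord ≤ ω := by
  rw [Cardinal.ord_le, card_omega0]
  exact (cof_le_card δ).trans (Cardinal.lt_aleph_one_iff.1 (Cardinal.lt_ord.1 hδ))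

lemma finite_Iio_of_lt_omega0 {o : Ordinal} (ho : o < ω) : (Iio o).Finite := by
  rw [← Cardinal.lt_aleph0_iff_set_finite, Cardinal.mk_Iio_ordinal, Cardinal.lift_lt_aleph0]
  exact card_lt_aleph0.2 ho

lemma IsOtp.finite_inter_Iio {s : Set Ordinal} {o c : Ordinal} (h : IsOtp s o) (ho : o ≤ ω)
    (hc : c ∈ s) : (s ∩ Iio c).Finite := by
  classical
  obtain ⟨e⟩ := h
  let f : Ordinal → Ordinal := fun x => if hx : x ∈ s then (e ⟨x, hx⟩).1 else 0
  refine Finite.of_injOn (f := f) (t := Iio (e ⟨c, hc⟩).1) ?_ ?_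
    (finite_Iio_of_lt_omega0 ((e ⟨c, hc⟩).2.trans_le ho))
  · rintro x ⟨hx, hxc⟩
    simpa [f, hx] using e.strictMono (Subtype.mk_lt_mk.2 hxc : (⟨x, hx⟩ : s) < ⟨c, hc⟩)
  · rintro x ⟨hx, -⟩ y ⟨hy, -⟩ hxy
    simp only [f, dif_pos hx, dif_pos hy] at hxy
    exact congrArg Subtype.val (e.injective (Subtype.ext hxy))

namespace IsCSequence

variable {C : Ordinal → Set Ordinal} (hC : IsCSequence C) {α δ : Ordinal}
include hC

lemma sInf_diff_Iio_mem (hαδ : α < δ) (hδ : δ < omega1) :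
    sInf (C δ \ Iio α) ∈ C δ ∩ Ico α δ := by
  obtain ⟨η, hη, hαη⟩ := (hC δ hδ).2 α hαδ
  obtain ⟨hmem, hge⟩ := csInf_mem (⟨η, hη, not_lt.2 hαη⟩ : (C δ \ Iio α).Nonempty)
  exact ⟨hmem, not_lt.1 hge, (hC δ hδ).1 _ hmem⟩

lemma finite_inter_Iio (hstar : StarProperty C) (hαδ : α < δ) (hδ : δ < omega1) :
    (C δ ∩ Iio α).Finite := by
  obtain ⟨hmem, hge, -⟩ := hC.sInf_diff_Iio_mem hαδ hδ
  exact ((hstar δ hδ).finite_inter_Iio (ord_cof_le_omega0_of_lt_omega1_s5 hδ) hmem).subset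
    fun c ⟨hc, hcα⟩ => ⟨hc, hcα.trans_le hge⟩

lemma eventually_diff_Iio_eq (hstar : StarProperty C) (hαδ : α < δ) (hδ : δ < omega1) :
    ∀ᶠ ξ in 𝓝 α, ξ ≤ α ∧ C δ \ Iio ξ = C δ \ Iio α := by
  have hle : ∀ᶠ ξ in 𝓝 α, ξ ≤ α := SuccOrder.nhdsLE_eq_nhds α ▸ self_mem_nhdsWithin
  have habove : ∀ᶠ ξ in 𝓝 α, ∀ c ∈ C δ ∩ Iio α, c < ξ :=
    (eventually_all_finite (hC.finite_inter_Iio hstar hαδ hδ)).2 fun c hc =>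
      eventually_gt_nhds hc.2
  filter_upwards [hle, habove] with ξ hξα habove
  refine ⟨hξα, Set.ext fun c => ?_⟩
  simp only [Set.mem_sdiff, mem_Iio, not_lt]
  exact ⟨fun ⟨hc, hξc⟩ => ⟨hc, not_lt.1 fun hcα => (habove c ⟨hc, hcα⟩).not_ge hξc⟩,
    fun ⟨hc, hαc⟩ => ⟨hc, hξα.trans hαc⟩⟩

end IsCSequence

namespace IsUpperTrace

variable {C : Ordinal → Set Ordinal} {Tr : Ordinal → Ordinal → Finset Ordinal}
  (hTr : IsUpperTrace C Tr) (hC : IsCSequence C)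
include hTr hC

lemma le_of_mem {α δ x : Ordinal} (hδ : δ < omega1) (hαδ : α ≤ δ) (hx : x ∈ Tr α δ) :
    x ≤ δ := by
  induction δ using WellFoundedLT.induction generalizing x with
  | _ δ IH =>
  rcases hαδ.eq_or_lt with rfl | hαδ
  · rw [hTr.1, Finset.mem_singleton] at hx
    exact hx.le
  obtain ⟨-, hge, hlt⟩ := hC.sInf_diff_Iio_mem hαδ hδ
  rw [hTr.2 α δ hαδ hδ, Finset.mem_insert] at hx
  rcases hx with rfl | hx
  · exact le_rfl
  · exact (IH _ hlt (hlt.trans hδ) hge hx).trans hlt.le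

lemma rho2_eq_add_one {ξ δ : Ordinal} (hξδ : ξ < δ) (hδ : δ < omega1) :
    rho2 Tr ξ δ = rho2 Tr ξ (sInf (C δ \ Iio ξ)) + 1 := by
  obtain ⟨-, hge, hlt⟩ := hC.sInf_diff_Iio_mem hξδ hδ
  have hδ_notMem : δ ∉ Tr ξ (sInf (C δ \ Iio ξ)) := fun h =>
    (hTr.le_of_mem hC (hlt.trans hδ) hge h).not_gt hlt
  rw [rho2, rho2, hTr.2 ξ δ hξδ hδ, Finset.card_insert_of_notMem hδ_notMem, Nat.cast_succ]

lemma eventually_rho2_eq (hstar : StarProperty C) {α δ : Ordinal} (hαδ : α ≤ δ)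
    (hδ : δ < omega1) : ∀ᶠ ξ in 𝓝 α, rho2 Tr ξ δ = rho2 Tr α δ + rho2 Tr ξ α - 1 := by
  induction δ using WellFoundedLT.induction with
  | _ δ IH =>
  rcases hαδ.eq_or_lt with rfl | hαδ
  · simp [rho2, hTr.1]
  obtain ⟨-, hge, hlt⟩ := hC.sInf_diff_Iio_mem hαδ hδ
  filter_upwards [hC.eventually_diff_Iio_eq hstar hαδ hδ, IH _ hlt hge (hlt.trans hδ)]
    with ξ ⟨hξα, hstep⟩ hξ
  rw [hTr.rho2_eq_add_one hC (hξα.trans_lt hαδ) hδ, hTr.rho2_eq_add_one hC hαδ hδ, hstep, hξ]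
  ring

end IsUpperTrace

/-- Theorem (coherence of ρ₂ modulo locally constant): for a C-sequence on ω₁ satisfying (⋆),
for all `β < γ < ω₁` the function `α ↦ ρ₂(α,γ) - ρ₂(α,β)` is locally constant on `β`
(with the order topology). -/
theorem statement5 (C : Ordinal → Set Ordinal) (hC : IsCSequence C) (hstar : StarProperty C)
    (Tr : Ordinal → Ordinal → Finset Ordinal) (hTr : IsUpperTrace C Tr) :
    ∀ β γ, β < γ → γ < omega1 →
      IsLocallyConstant (fun α : Set.Iio β => rho2 Tr α.1 γ - rho2 Tr α.1 β) := by
  intro β γ hβγ hγ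
  refine (IsLocallyConstant.iff_eventually_eq _).2 fun ⟨α, hαβ⟩ => ?_
  have near_β := hTr.eventually_rho2_eq hC hstar hαβ.le (hβγ.trans hγ)
  have near_γ := hTr.eventually_rho2_eq hC hstar (hαβ.trans hβγ).le hγ
  filter_upwards [continuous_subtype_val.continuousAt.eventually (near_β.and near_γ)]
    with ξ ⟨hξβ, hξγ⟩
  rw [hξβ, hξγ]
  ring
end
end
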